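/- Seiberg duality anomaly matching: with $\tilde r = -\frac{N_f - N_c}{N_f}$ fixed, the magnetic anomalies $\tilde a^{hol}_{QCD}(r_M) = \frac{1}{24}\big(-1 + 2N_fN_c - N_c^2 + N_f^2(r_M-1)\big)$ and $\tilde c^{hol}_{QCD}(r_M) = \frac{1}{48N_f^2}\big(N_f^2 + N_f^4 - 6N_f^3N_c + 11N_f^2N_c^2 - 8N_fN_c^3 + 2N_c^4 - r_M^3 N_f^4\big)$ satisfy $\tilde a^{hol}_{QCD}(r_M) = a^{hol}_{QCD}$ and $\tilde c^{hol}_{QCD}(r_M) = c^{hol}_{QCD}$ if and only if $r_M = 1 - \frac{2N_c}{N_f}$, where $a^{hol}_{QCD} = -\frac{1}{24}(N_c^2+1)$ and $c^{hol}_{QCD} = \frac{1}{48N_f^2}(2N_c^4 - N_c^2N_f^2 + N_f^2)$. -/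
import Mathlib


theorem seiberg_duality_anomaly_matching (Nc Nf : ℕ) (hNc : 0 < Nc) (h : Nc < Nf)
    (rM : ℚ) :
    ((1/24 : ℚ) * (-1 + 2 * (Nf : ℚ) * (Nc : ℚ) - (Nc : ℚ)^2 + (Nf : ℚ)^2 * (rM - 1))
        = -(1/24) * ((Nc : ℚ)^2 + 1) ∧
     (1 / (48 * (Nf : ℚ)^2))
        * ((Nf : ℚ)^2 + (Nf : ℚ)^4 - 6 * (Nf : ℚ)^3 * (Nc : ℚ)
            + 11 * (Nf : ℚ)^2 * (Nc : ℚ)^2 - 8 * (Nf : ℚ) * (Nc : ℚ)^3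
            + 2 * (Nc : ℚ)^4 - rM^3 * (Nf : ℚ)^4)
        = (1 / (48 * (Nf : ℚ)^2))
            * (2 * (Nc : ℚ)^4 - (Nc : ℚ)^2 * (Nf : ℚ)^2 + (Nf : ℚ)^2))
    ↔ rM = 1 - 2 * (Nc : ℚ) / (Nf : ℚ) := by
  have hNf : (Nf : ℚ) ≠ 0 := by
    exact_mod_cast (Nat.zero_lt_of_lt h).ne'
  constructor
  · rintro ⟨h1, -⟩
    have key : (Nf:ℚ) * (rM * Nf - (Nf - 2*Nc)) = 0 := by linear_combination 24 * h1
    have h2 : rM * Nf - ((Nf:ℚ) - 2*Nc) = 0 := (mul_eq_zero.mp key).resolve_left hNf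
    field_simp
    linarith
  · intro hr
    subst hr
    constructor <;> field_simp <;> ring
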